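/- arXiv:1803.08349 — 2 statements merged into one kernel-verified Lean document; each statement's English description precedes it below -/
import Mathlib

section
/- Let q > 1 be a real number and 0 < δ < 1. Then the family n ↦ (1 + δ^n q^{−n})^{s_n(q)/n} (n ≥ 1) is multipliable, and (1 + δ/q)^{−1} · ∏_{n=1}^∞ (1 + δ^n q^{−n})^{s_n(q)/n} = (1 − δ² q^{−1})/(1 − δ). -/
/-- `s 1 (q) = q + 1` and `s n (q) = ∑_{d ∣ n} μ(n/d) q^d` for `n ≠ 1`.
(For `n = 0` the sum over divisors is empty, so `sFun q 0 = 0`.) -/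
noncomputable def sFun (q : ℝ) (n : ℕ) : ℝ :=
  if n = 1 then q + 1
  else ∑ d ∈ n.divisors, (ArithmeticFunction.moebius (n / d) : ℝ) * q ^ d

/-!
Put `a_n = ∑_{d ∣ n} μ(n/d) q^d`, so that `s_n = a_n + [n = 1]`. Expanding
`log (1 - t^n) = -∑_k t^{nk}/k` and collecting the absolutely convergent double series
along `m = nk`, Möbius inversion `∑_{n ∣ m} a_n = q^m` yields the cyclotomic identity
`∏_n (1 - t^n)^{a_n/n} = 1 - q t` for `q |t| < 1`. Since `1 + t^n = (1 - t^{2n}) / (1 - t^n)`,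
at `t = δ/q` this gives `∏_n (1 + t^n)^{a_n/n} = (1 - δ²/q) / (1 - δ)`, and the extra
exponent `[n = 1]` contributes exactly the factor `1 + δ/q`.
-/

open Finset Real

theorem HasSum.sum_divisorsAntidiagonal {α : Type*} [AddCommGroup α] [UniformSpace α]
    [IsUniformAddGroup α] [CompleteSpace α] [T2Space α] {f : ℕ × ℕ → α} {a : α} (hf : HasSum f a)
    (hf0 : ∀ p : ℕ × ℕ, p.1 * p.2 = 0 → f p = 0) :
    HasSum (fun m : ℕ ↦ ∑ p ∈ m.divisorsAntidiagonal, f p) a := by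
  have hfib := hf.tsum_fiberwise fun p : ℕ × ℕ ↦ p.1 * p.2
  refine hfib.congr_fun fun m ↦ ?_
  rcases eq_or_ne m 0 with rfl | hm
  · rw [Nat.divisorsAntidiagonal_zero, sum_empty]
    have hzero : ∀ p : (fun p : ℕ × ℕ ↦ p.1 * p.2) ⁻¹' {0}, f p = 0 := fun p ↦ hf0 p.1 p.2
    rw [tsum_congr hzero, tsum_zero]
  · rw [show (fun p : ℕ × ℕ ↦ p.1 * p.2) ⁻¹' {m} = m.divisorsAntidiagonal by ext; simp [hm],
      Finset.tsum_subtype' m.divisorsAntidiagonal f]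

/-- The `k = 0` term is `x ^ 0 / 0 = 0`. -/
theorem hasSum_pow_div_natCast_of_abs_lt_one {x : ℝ} (h : |x| < 1) :
    HasSum (fun k : ℕ ↦ x ^ k / k) (-log (1 - x)) := by
  have := (hasSum_nat_add_iff (f := fun k : ℕ ↦ x ^ k / k) 1).mp <| by
    simpa using hasSum_pow_div_log_of_abs_lt_one h
  simpa using this

/-- For `q ∈ ℕ` this is the number of aperiodic words of length `n` over a `q`-letter alphabet. -/
noncomputable def aperiodicCount (q : ℝ) (n : ℕ) : ℝ :=
  ∑ d ∈ n.divisors, (ArithmeticFunction.moebius (n / d) : ℝ) * q ^ d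

theorem sum_divisors_aperiodicCount (q : ℝ) {m : ℕ} (hm : 0 < m) :
    ∑ d ∈ m.divisors, aperiodicCount q d = q ^ m := by
  refine (ArithmeticFunction.sum_eq_iff_sum_mul_moebius_eq
    (f := aperiodicCount q) (g := (q ^ ·))).mpr (fun n _ ↦ ?_) m hm
  rw [Nat.sum_divisorsAntidiagonal' (f := fun a b ↦ (ArithmeticFunction.moebius a : ℝ) * q ^ b)]
  rfl

theorem abs_aperiodicCount_le {q : ℝ} (hq : 1 ≤ q) (n : ℕ) :
    |aperiodicCount q n| ≤ n * q ^ n := by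
  have hterm : ∀ d ∈ n.divisors,
      |(ArithmeticFunction.moebius (n / d) : ℝ) * q ^ d| ≤ q ^ n := fun d hd ↦ by
    rw [abs_mul, abs_of_nonneg (by positivity : (0 : ℝ) ≤ q ^ d)]
    have hμ : |(ArithmeticFunction.moebius (n / d) : ℝ)| ≤ 1 := by
      exact_mod_cast ArithmeticFunction.abs_moebius_le_one
    calc _ ≤ 1 * q ^ d := by gcongr
      _ ≤ q ^ n := by rw [one_mul]; exact pow_le_pow_right₀ hq (Nat.divisor_le hd)
  calc |aperiodicCount q n|
      ≤ #n.divisors • q ^ n := (abs_sum_le_sum_abs _ _).trans (sum_le_card_nsmul _ _ _ hterm)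
    _ ≤ n * q ^ n := by
      rw [nsmul_eq_mul]; gcongr; exact_mod_cast Nat.card_divisors_le_self n

theorem sFun_eq_aperiodicCount_add (q : ℝ) (n : ℕ) :
    sFun q n = aperiodicCount q n + if n = 1 then 1 else 0 := by
  rcases eq_or_ne n 1 with rfl | h
  · simp [sFun, aperiodicCount]
  · simp [sFun, aperiodicCount, h]

theorem abs_aperiodicCount_div_mul_pow_div_le {q t : ℝ} (hq : 1 ≤ q) (ht : |t| ≤ 1) (n k : ℕ) :
    |aperiodicCount q n / n * (t ^ (n * k) / k)| ≤ (q * |t|) ^ n * |t| ^ (k - 1) := by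
  have hbound : 0 ≤ (q * |t|) ^ n * |t| ^ (k - 1) := by
    have : 0 ≤ q := zero_le_one.trans hq
    positivity
  rcases Nat.eq_zero_or_pos n with rfl | hn
  · simp
  rcases Nat.eq_zero_or_pos k with rfl | hk
  · simpa using hbound
  have hexp : n + (k - 1) ≤ n * k := by
    obtain ⟨j, rfl⟩ := Nat.exists_eq_succ_of_ne_zero hk.ne'
    rw [Nat.succ_sub_one, Nat.mul_succ]
    nlinarith [Nat.le_mul_of_pos_left j hn]
  have hcoeff : |aperiodicCount q n / n| ≤ q ^ n := by
    rw [abs_div, Nat.abs_cast, div_le_iff₀ (by exact_mod_cast hn), mul_comm]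
    exact abs_aperiodicCount_le hq n
  have hpow : |t ^ (n * k) / k| ≤ |t| ^ n * |t| ^ (k - 1) := by
    rw [abs_div, Nat.abs_cast, abs_pow, ← pow_add]
    calc |t| ^ (n * k) / k ≤ |t| ^ (n * k) := div_le_self (by positivity) (by exact_mod_cast hk)
      _ ≤ |t| ^ (n + (k - 1)) := pow_le_pow_of_le_one (abs_nonneg t) ht hexp
  calc _ = |aperiodicCount q n / n| * |t ^ (n * k) / k| := abs_mul _ _
    _ ≤ q ^ n * (|t| ^ n * |t| ^ (k - 1)) := by gcongr
    _ = (q * |t|) ^ n * |t| ^ (k - 1) := by ring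

theorem summable_aperiodicCount_div_mul_pow_div {q t : ℝ} (hq : 1 ≤ q) (ht : q * |t| < 1) :
    Summable fun p : ℕ × ℕ ↦ aperiodicCount q p.1 / p.1 * (t ^ (p.1 * p.2) / p.2) := by
  have ht1 : |t| < 1 := lt_of_le_of_lt (le_mul_of_one_le_left (abs_nonneg t) hq) ht
  have hgeom : Summable fun k : ℕ ↦ |t| ^ (k - 1) :=
    (summable_nat_add_iff 1).mp (by simpa using summable_geometric_of_lt_one (abs_nonneg t) ht1)
  have hr : 0 ≤ q * |t| := mul_nonneg (zero_le_one.trans hq) (abs_nonneg t)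
  have hprod : Summable fun p : ℕ × ℕ ↦ (q * |t|) ^ p.1 * |t| ^ (p.2 - 1) :=
    Summable.mul_of_nonneg (f := fun n : ℕ ↦ (q * |t|) ^ n) (g := fun k : ℕ ↦ |t| ^ (k - 1))
      (summable_geometric_of_lt_one hr ht) hgeom
      (fun _ ↦ pow_nonneg hr _) (fun _ ↦ pow_nonneg (abs_nonneg t) _)
  exact hprod.of_norm_bounded fun p ↦ abs_aperiodicCount_div_mul_pow_div_le hq ht1.le p.1 p.2

theorem sum_divisorsAntidiagonal_aperiodicCount_div_mul_pow_div (q t : ℝ) (m : ℕ) :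
    ∑ p ∈ m.divisorsAntidiagonal, aperiodicCount q p.1 / p.1 * (t ^ (p.1 * p.2) / p.2)
      = (q * t) ^ m / m := by
  rcases Nat.eq_zero_or_pos m with rfl | hm
  · simp
  have hterm : ∀ p ∈ m.divisorsAntidiagonal,
      aperiodicCount q p.1 / p.1 * (t ^ (p.1 * p.2) / p.2)
        = aperiodicCount q p.1 * (t ^ m / m) := by
    rintro ⟨a, b⟩ hp
    obtain ⟨rfl, hab⟩ := Nat.mem_divisorsAntidiagonal.mp hp
    have ha : (a : ℝ) ≠ 0 := by exact_mod_cast left_ne_zero_of_mul hab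
    have hb : (b : ℝ) ≠ 0 := by exact_mod_cast right_ne_zero_of_mul hab
    push_cast
    field_simp
  rw [sum_congr rfl hterm, ← sum_mul,
    Nat.sum_divisorsAntidiagonal (f := fun a _ ↦ aperiodicCount q a),
    sum_divisors_aperiodicCount q hm, mul_pow, mul_div_assoc]

theorem hasSum_aperiodicCount_div_mul_log_one_sub {q t : ℝ} (hq : 1 ≤ q) (ht : q * |t| < 1) :
    HasSum (fun n : ℕ ↦ aperiodicCount q n / n * log (1 - t ^ n)) (log (1 - q * t)) := by
  have ht1 : |t| < 1 := lt_of_le_of_lt (le_mul_of_one_le_left (abs_nonneg t) hq) ht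
  have hqt : |q * t| < 1 := by rwa [abs_mul, abs_of_nonneg (by linarith : (0 : ℝ) ≤ q)]
  have hsum := (summable_aperiodicCount_div_mul_pow_div hq ht).hasSum
  have hfib := hsum.sum_divisorsAntidiagonal fun p hp ↦ by
    rcases Nat.mul_eq_zero.mp hp with h | h <;> simp [h]
  simp only [sum_divisorsAntidiagonal_aperiodicCount_div_mul_pow_div] at hfib
  rw [← (hasSum_pow_div_natCast_of_abs_lt_one hqt).unique hfib] at hsum
  have hrows : ∀ n : ℕ, HasSum (fun k ↦ aperiodicCount q n / n * (t ^ (n * k) / k))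
      (-(aperiodicCount q n / n * log (1 - t ^ n))) := fun n ↦ by
    rcases Nat.eq_zero_or_pos n with rfl | hn
    · simp
    have htn : |t ^ n| < 1 := by rw [abs_pow]; exact pow_lt_one₀ (abs_nonneg t) ht1 hn.ne'
    simpa [pow_mul] using
      (hasSum_pow_div_natCast_of_abs_lt_one htn).mul_left (aperiodicCount q n / n)
  simpa using (hsum.prod_fiberwise hrows).neg

theorem hasSum_aperiodicCount_div_mul_log_one_add {q t : ℝ} (hq : 1 ≤ q) (ht : q * |t| < 1) :
    HasSum (fun n : ℕ ↦ aperiodicCount q n / n * log (1 + t ^ n))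
      (log (1 - q * t ^ 2) - log (1 - q * t)) := by
  have ht1 : |t| < 1 := lt_of_le_of_lt (le_mul_of_one_le_left (abs_nonneg t) hq) ht
  have ht2 : q * |t ^ 2| < 1 := by
    rw [abs_pow, sq]
    calc q * (|t| * |t|) ≤ q * |t| := by
          gcongr
          exact mul_le_of_le_one_right (abs_nonneg t) ht1.le
      _ < 1 := ht
  refine ((hasSum_aperiodicCount_div_mul_log_one_sub hq ht2).sub
    (hasSum_aperiodicCount_div_mul_log_one_sub hq ht)).congr_fun fun n ↦ ?_
  rcases Nat.eq_zero_or_pos n with rfl | hn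
  · simp
  have htn : |t ^ n| < 1 := by rw [abs_pow]; exact pow_lt_one₀ (abs_nonneg t) ht1 hn.ne'
  have hsub : 1 - t ^ n ≠ 0 := by linarith [le_abs_self (t ^ n)]
  have hadd : 1 + t ^ n ≠ 0 := by linarith [neg_abs_le (t ^ n)]
  rw [← mul_sub, ← pow_mul, mul_comm 2 n, pow_mul,
    show 1 - (t ^ n) ^ 2 = (1 - t ^ n) * (1 + t ^ n) by ring, log_mul hsub hadd]
  ring

/-- For `q > 1` and `0 < δ < 1`, the family `n ↦ (1 + δ^n q^{-n})^{s_n(q)/n}` (for `n ≥ 1`;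
the `n = 0` factor has exponent `0/0 = 0` and hence equals `1`) is multipliable, and
`(1 + δ/q)⁻¹ ∏_{n ≥ 1} (1 + δ^n q^{-n})^{s_n(q)/n} = (1 − δ²/q)/(1 − δ)`.
Here `x ^ a` is the real power `Real.rpow`. -/
theorem multipliable_and_tprod_special_value (q δ : ℝ) (hq : 1 < q)
    (hδ0 : 0 < δ) (hδ1 : δ < 1) :
    Multipliable (fun n : ℕ => (1 + δ ^ n / q ^ n) ^ (sFun q n / (n : ℝ))) ∧
    (1 + δ / q)⁻¹ * ∏' n : ℕ, (1 + δ ^ n / q ^ n) ^ (sFun q n / (n : ℝ))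
      = (1 - δ ^ 2 / q) / (1 - δ) := by
  have hq0 : 0 < q := zero_lt_one.trans hq
  have hu0 : 0 < δ / q := div_pos hδ0 hq0
  have hqu : q * (δ / q) = δ := mul_div_cancel₀ δ hq0.ne'
  have hlog : HasSum (fun n : ℕ ↦ sFun q n / n * log (1 + (δ / q) ^ n))
      (log (1 - q * (δ / q) ^ 2) - log (1 - q * (δ / q)) + log (1 + δ / q)) := by
    have hu : q * |δ / q| < 1 := by rwa [abs_of_pos hu0, hqu]
    refine ((hasSum_aperiodicCount_div_mul_log_one_add hq.le hu).add
      (hasSum_ite_eq 1 (log (1 + δ / q)))).congr_fun fun n ↦ ?_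
    rw [sFun_eq_aperiodicCount_add]
    split_ifs with h <;> simp [h, add_mul]
  have hprod : HasProd (fun n : ℕ ↦ (1 + δ ^ n / q ^ n) ^ (sFun q n / n))
      (exp (log (1 - q * (δ / q) ^ 2) - log (1 - q * (δ / q)) + log (1 + δ / q))) :=
    hlog.rexp.congr_fun fun n ↦ by
      rw [← div_pow, rpow_def_of_pos (by positivity), mul_comm]
      rfl
  refine ⟨hprod.multipliable, ?_⟩
  have hv : q * (δ / q) ^ 2 = δ ^ 2 / q := by field_simp
  have hv1 : δ ^ 2 / q < 1 := by
    rw [div_lt_one hq0]; nlinarith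
  rw [hprod.tprod_eq, hqu, hv, exp_add, exp_sub, exp_log (by linarith), exp_log (by linarith),
    exp_log (by positivity)]
  field_simp
end

section
/- Let q > 1 be a real number, 0 < δ < 1, and let p = (p_1, p_2, …) be a real sequence with |p_n| < δ^n/q^n for all n ≥ 1. Then the family n ↦ (1 + p_n)^{M_n(q)} is multipliable with product H_q(p) > 0, the family n ↦ (1 + p_n)^{s_n(q)/n} is multipliable, and ∏_{n≥1} (1 + p_n)^{s_n(q)/n} = (1 + p_1) · H_q(p). -/
/-- `M_n(q) = (1/n) ∑_{d ∣ n} μ(n/d) q^d`; so `M_1(q) = q` and `M_n(q) = s_n(q)/n` for `n ≥ 2`.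
(For `n = 0` this is `0` by the conventions `1/0 = 0` and the empty sum.) -/
noncomputable def MFun (q : ℝ) (n : ℕ) : ℝ :=
  (1 / (n : ℝ)) * ∑ d ∈ n.divisors, (ArithmeticFunction.moebius (n / d) : ℝ) * q ^ d

/-- `H_q(p) = ∏_{n ≥ 1} (1 + p_n)^{M_n(q)}`, a product of real powers (`Real.rpow`).
The `n = 0` factor is `(1 + p 0) ^ (0 : ℝ) = 1`, so the product effectively runs over `n ≥ 1`. -/
noncomputable def Hfun (q : ℝ) (p : ℕ → ℝ) : ℝ :=
  ∏' n : ℕ, (1 + p n) ^ (MFun q n)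

/-!
Write `(1 + p n) ^ M_n(q) = exp (M_n(q) * log (1 + p n))`. Since `|M_n(q)| ≤ q ^ n` and
`|log (1 + x)| ≤ |x| / (1 - δ)` for `|x| ≤ δ`, the exponents are dominated by a multiple of `δ ^ n`,
so they are summable and the product converges to a positive exponential. The exponent `s_n(q)/n`
agrees with `M_n(q)` except at `n = 1`, where it is larger by `1`; this contributes the extra
factor `1 + p 1`.
-/

open Real Filter

theorem abs_log_one_add_le {x r : ℝ} (hx : |x| ≤ r) (hr : r < 1) :
    |log (1 + x)| ≤ |x| / (1 - r) := by
  have h := abs_log_sub_add_sum_range_le (x := -x) (by rw [abs_neg]; linarith) 0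
  simp only [Finset.range_zero, Finset.sum_empty, zero_add, pow_one, abs_neg, sub_neg_eq_add] at h
  exact h.trans (div_le_div_of_nonneg_left (abs_nonneg x) (by linarith) (by linarith))

theorem summable_mul_log_one_add {ι : Type*} {a x : ι → ℝ} {r : ℝ} (hr : r < 1)
    (hx : ∀ᶠ i in cofinite, |x i| ≤ r) (h : Summable fun i => a i * x i) :
    Summable fun i => a i * log (1 + x i) := by
  refine (h.abs.div_const (1 - r)).of_norm_bounded_eventually ?_
  filter_upwards [hx] with i hi
  rw [norm_mul, Real.norm_eq_abs, Real.norm_eq_abs, abs_mul, mul_div_assoc]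
  exact mul_le_mul_of_nonneg_left (abs_log_one_add_le hi hr) (abs_nonneg _)

theorem hasProd_rpow_of_hasSum_mul_log {ι : Type*} {a x : ι → ℝ} {S : ℝ}
    (hx : ∀ i, 0 < x i ∨ a i = 0) (h : HasSum (fun i => a i * log (x i)) S) :
    HasProd (fun i => x i ^ a i) (exp S) := by
  have hlog : ∀ i, log (x i ^ a i) = a i * log (x i) := fun i => by
    rcases hx i with hxi | hai
    · rw [log_rpow hxi]
    · simp [hai]
  refine hasProd_of_hasSum_log (fun i => ?_) (h.congr_fun hlog)
  rcases hx i with hxi | hai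
  · exact rpow_pos_of_pos hxi _
  · simp [hai]

theorem MFun_zero (q : ℝ) : MFun q 0 = 0 := by simp [MFun]

theorem abs_MFun_le {q : ℝ} (hq : 1 ≤ q) (n : ℕ) : |MFun q n| ≤ q ^ n := by
  rcases n.eq_zero_or_pos with rfl | hn
  · simp [MFun_zero]
  have hterm : ∀ d ∈ n.divisors,
      |(ArithmeticFunction.moebius (n / d) : ℝ) * q ^ d| ≤ q ^ n := fun d hd => by
    have hμ : |(ArithmeticFunction.moebius (n / d) : ℝ)| ≤ 1 := by
      exact_mod_cast ArithmeticFunction.abs_moebius_le_one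
    have hqd : |q ^ d| ≤ q ^ n := by
      rw [abs_of_nonneg (pow_nonneg (by linarith) d)]
      exact pow_le_pow_right₀ hq (Nat.divisor_le hd)
    rw [abs_mul]
    simpa using mul_le_mul hμ hqd (abs_nonneg _) zero_le_one
  have hn' : (0 : ℝ) < n := by exact_mod_cast hn
  calc |MFun q n| ≤ 1 / n * ∑ d ∈ n.divisors, q ^ n := by
        rw [MFun, abs_mul, abs_of_pos (by positivity)]
        gcongr
        exact (Finset.abs_sum_le_sum_abs _ _).trans (Finset.sum_le_sum hterm)
    _ ≤ 1 / n * (n * q ^ n) := by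
        rw [Finset.sum_const, nsmul_eq_mul]
        gcongr
        exact_mod_cast Nat.card_divisors_le_self n
    _ = q ^ n := by field_simp

theorem sFun_div_eq_MFun_add (q : ℝ) (n : ℕ) :
    sFun q n / n = MFun q n + if n = 1 then 1 else 0 := by
  by_cases hn : n = 1
  · subst hn; simp [sFun, MFun]
  · simp [sFun, MFun, hn, div_eq_inv_mul]

theorem summable_MFun_mul {q δ : ℝ} (hq : 1 < q) (hδ0 : 0 < δ) (hδ1 : δ < 1) {p : ℕ → ℝ}
    (hp : ∀ n : ℕ, 1 ≤ n → |p n| < δ ^ n / q ^ n) :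
    Summable fun n => MFun q n * p n := by
  refine (summable_geometric_of_lt_one hδ0.le hδ1).of_norm_bounded fun n => ?_
  rcases n.eq_zero_or_pos with rfl | hn
  · simp [MFun_zero]
  rw [Real.norm_eq_abs, abs_mul]
  calc |MFun q n| * |p n| ≤ q ^ n * (δ ^ n / q ^ n) :=
        mul_le_mul (abs_MFun_le hq.le n) (hp n hn).le (abs_nonneg _) (by positivity)
    _ = δ ^ n := mul_div_cancel₀ _ (by positivity)

/-- For `q > 1`, `0 < δ < 1` and a real sequence `p` with `|p_n| < δ^n/q^n` for all `n ≥ 1`: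
the family `n ↦ (1 + p_n)^{M_n(q)}` is multipliable with product `H_q(p) > 0`, the family
`n ↦ (1 + p_n)^{s_n(q)/n}` is multipliable, and
`∏_{n ≥ 1} (1 + p_n)^{s_n(q)/n} = (1 + p_1) · H_q(p)`. -/
theorem multipliable_and_tprod_eq_of_small (q δ : ℝ) (hq : 1 < q)
    (hδ0 : 0 < δ) (hδ1 : δ < 1)
    (p : ℕ → ℝ) (hp : ∀ n : ℕ, 1 ≤ n → |p n| < δ ^ n / q ^ n) :
    Multipliable (fun n : ℕ => (1 + p n) ^ (MFun q n)) ∧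
    0 < Hfun q p ∧
    Multipliable (fun n : ℕ => (1 + p n) ^ (sFun q n / (n : ℝ))) ∧
    ∏' n : ℕ, (1 + p n) ^ (sFun q n / (n : ℝ)) = (1 + p 1) * Hfun q p := by
  have hpδ : ∀ n : ℕ, n ≠ 0 → |p n| ≤ δ := fun n hn =>
    calc |p n| ≤ δ ^ n / q ^ n := (hp n (Nat.one_le_iff_ne_zero.mpr hn)).le
      _ ≤ δ ^ n := div_le_self (pow_nonneg hδ0.le n) (one_le_pow₀ hq.le)
      _ ≤ δ := pow_le_of_le_one hδ0.le hδ1.le hn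
  have hpos : ∀ n : ℕ, n ≠ 0 → 0 < 1 + p n := fun n hn => by
    linarith [neg_abs_le (p n), hpδ n hn]
  obtain ⟨S, hS⟩ := summable_mul_log_one_add hδ1 ((eventually_cofinite_ne 0).mono hpδ)
    (summable_MFun_mul hq hδ0 hδ1 hp)
  have hM : HasProd (fun n : ℕ => (1 + p n) ^ (MFun q n)) (exp S) := by
    refine hasProd_rpow_of_hasSum_mul_log (fun n => ?_) hS
    rcases eq_or_ne n 0 with rfl | hn
    exacts [Or.inr (MFun_zero q), Or.inl (hpos n hn)]
  have hs : HasProd (fun n : ℕ => (1 + p n) ^ (sFun q n / (n : ℝ)))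
      (exp (S + log (1 + p 1))) := by
    refine hasProd_rpow_of_hasSum_mul_log (fun n => ?_) ?_
    · rcases eq_or_ne n 0 with rfl | hn
      exacts [Or.inr (by simp), Or.inl (hpos n hn)]
    refine (hS.add (hasSum_ite_eq 1 (log (1 + p 1)))).congr_fun fun n => ?_
    rw [sFun_div_eq_MFun_add, add_mul]
    split_ifs with hn
    · rw [hn, one_mul]
    · rw [zero_mul]
  refine ⟨hM.multipliable, ?_, hs.multipliable, ?_⟩
  · rw [Hfun, hM.tprod_eq]
    exact exp_pos S
  · rw [hs.tprod_eq, Hfun, hM.tprod_eq, exp_add, exp_log (hpos 1 one_ne_zero), mul_comm]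
end
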